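/- The binary Champernowne sequence c is typical, i.e. lim_{n→∞} L_n(c)/log₂ n = 1. -/

import Mathlib

/-!
A run of ones in the Champernowne sequence meets at most two consecutive blocks `c`, `c + 1`,
and the trailing ones of `c` turn into trailing zeros of `c + 1`; hence the run is no longer than
the binary expansion of `c + 1`, and `L_n ≤ size n ≤ log₂ n + 1`. Conversely, the block of
`2 ^ m - 1` is a run of `m` ones ending before position `m 2 ^ m`, which gives
`L_n ≥ log₂ n - log₂ log₂ n - 1`. Both error terms are `o(log₂ n)`.
-/

open Filter

open Classical in
/-- `L_n(x)`: the maximal length of a run of consecutive ones among the first `n`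
digits (positions `1,…,n`) of the binary sequence `x`. -/
noncomputable def runL (x : ℕ → Bool) (n : ℕ) : ℕ :=
  Nat.findGreatest
    (fun j => ∃ i, i + j ≤ n ∧ ∀ k, 1 ≤ k → k ≤ j → x (i + k) = true) n

/-- A binary sequence is typical if `L_n(x)/log₂ n → 1`. -/
def Typical (x : ℕ → Bool) : Prop :=
  Tendsto (fun n : ℕ => (runL x n : ℝ) / Real.logb 2 (n : ℝ)) atTop (nhds 1)

/-- The infinite binary sequence (indexed from 1) obtained by concatenating
the nonempty blocks `b 1, b 2, b 3, …`. -/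
def concatSeq (b : ℕ → List Bool) : ℕ → Bool :=
  fun i => (((List.range i).map fun k => b (k + 1)).flatten).getD (i - 1) false

/-- The binary Champernowne sequence `1 10 11 100 101 110 111 …`, the
concatenation of the binary representations (without leading zeros, most
significant bit first) of `1, 2, 3, …`. -/
def champ : ℕ → Bool :=
  concatSeq fun n => (Nat.bits n).reverse

open Asymptotics Real

theorem le_runL {x : ℕ → Bool} {n i j : ℕ} (hij : i + j ≤ n)
    (hrun : ∀ k, 1 ≤ k → k ≤ j → x (i + k) = true) : j ≤ runL x n := by
  classical
  exact Nat.le_findGreatest (by omega) ⟨i, hij, hrun⟩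

theorem runL_le {x : ℕ → Bool} {n B : ℕ}
    (hB : ∀ i j, i + j ≤ n → (∀ k, 1 ≤ k → k ≤ j → x (i + k) = true) → j ≤ B) :
    runL x n ≤ B := by
  classical
  obtain ⟨i, hij, hrun⟩ := Nat.findGreatest_spec (P := fun j =>
    ∃ i, i + j ≤ n ∧ ∀ k, 1 ≤ k → k ≤ j → x (i + k) = true) (Nat.zero_le n)
    ⟨0, by omega, fun k hk hk' => by omega⟩
  exact hB i _ hij hrun

namespace concatSeq

def blockPrefix (b : ℕ → List Bool) (M : ℕ) : List Bool :=
  ((List.range M).map fun k => b (k + 1)).flatten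

theorem blockPrefix_succ (b : ℕ → List Bool) (M : ℕ) :
    blockPrefix b (M + 1) = blockPrefix b M ++ b (M + 1) := by
  simp [blockPrefix, List.range_succ]

theorem blockPrefix_isPrefix (b : ℕ → List Bool) {M M' : ℕ} (h : M ≤ M') :
    blockPrefix b M <+: blockPrefix b M' := by
  induction M', h using Nat.le_induction with
  | base => exact List.prefix_refl _
  | succ M' _ ih => exact ih.trans (blockPrefix_succ b M' ▸ List.prefix_append _ _)

theorem le_length_blockPrefix {b : ℕ → List Bool} (hb : ∀ k, b (k + 1) ≠ []) (M : ℕ) :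
    M ≤ (blockPrefix b M).length := by
  induction M with
  | zero => simp
  | succ M ih =>
    have := List.length_pos_iff.2 (hb M)
    rw [blockPrefix_succ, List.length_append]
    omega

theorem eq_getD_blockPrefix {b : ℕ → List Bool} (hb : ∀ k, b (k + 1) ≠ []) {M i : ℕ}
    (hi : i < (blockPrefix b M).length) :
    concatSeq b (i + 1) = (blockPrefix b M).getD i false := by
  change (blockPrefix b (i + 1)).getD i false = _
  have hi' : i < (blockPrefix b (i + 1)).length := le_length_blockPrefix hb (i + 1)
  rcases le_total (i + 1) M with h | h <;>
    rw [List.getD_eq_getElem _ _ hi', List.getD_eq_getElem _ _ hi,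
      (blockPrefix_isPrefix b h).getElem]

theorem length_blockPrefix_add {b : ℕ → List Bool} (hb : ∀ k, b (k + 1) ≠ []) {M j : ℕ}
    (hj : j < (b (M + 1)).length) :
    concatSeq b ((blockPrefix b M).length + j + 1) = (b (M + 1))[j] := by
  rw [eq_getD_blockPrefix hb (M := M + 1) (by simp [blockPrefix_succ, hj]), blockPrefix_succ,
    List.getD_append_right _ _ _ _ (by omega), List.getD_eq_getElem _ _ (by simpa using hj)]
  simp

end concatSeq

namespace Nat

theorem size_eq_log_add_one {n : ℕ} (hn : n ≠ 0) : n.size = Nat.log 2 n + 1 := by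
  have hpos : 0 < n.size := Nat.size_pos.2 (Nat.pos_of_ne_zero hn)
  have := (Nat.log_eq_iff (b := 2) (m := n.size - 1) (Or.inr ⟨one_lt_two, hn⟩)).2
    ⟨Nat.lt_size.1 (by omega), by rw [Nat.sub_add_cancel hpos]; exact Nat.lt_size_self n⟩
  omega

theorem size_two_pow_sub_one (m : ℕ) : (2 ^ m - 1).size = m := by
  have hpos : 0 < 2 ^ m := Nat.two_pow_pos m
  refine le_antisymm (Nat.size_le.2 (by omega)) ?_
  cases m with
  | zero => simp
  | succ m => exact Nat.lt_size.2 (by rw [pow_succ]; omega)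

theorem testBit_succ_eq_false {c t d : ℕ} (hc : ∀ e < t, c.testBit e = true) (hd : d < t) :
    (c + 1).testBit d = false := by
  have hmod : c % 2 ^ t = 2 ^ t - 1 := Nat.eq_of_testBit_eq fun e => by
    by_cases he : e < t <;> simp [Nat.testBit_mod_two_pow, Nat.testBit_two_pow_sub_one, he, hc]
  have hdvd : (c + 1) % 2 ^ t = 0 := by
    rw [Nat.add_mod, hmod]
    simp [Nat.sub_add_cancel (Nat.one_le_two_pow)]
  simpa [hd] using congrArg (Nat.testBit · d) hdvd

theorem add_le_size_succ {c t s : ℕ} (hs : 0 < s) (hs' : s ≤ (c + 1).size)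
    (hlow : ∀ d < t, c.testBit d = true)
    (htop : ∀ d < s, (c + 1).testBit ((c + 1).size - 1 - d) = true) :
    t + s ≤ (c + 1).size := by
  by_contra! h
  have := htop (s - 1) (by omega)
  rw [testBit_succ_eq_false hlow (by omega)] at this
  exact Bool.false_ne_true this

end Nat

theorem Asymptotics.isEquivalent_of_abs_sub_le_logb {ι : Type*} {l : Filter ι} {u v : ι → ℝ}
    {b C : ℝ} (hv : Tendsto v l atTop) (h : ∀ᶠ i in l, |u i - v i| ≤ logb b (v i) + C) :
    u ~[l] v := by
  have ho : (fun x => logb b x + C) =o[atTop] id :=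
    isLittleO_logb_id_atTop.add (isLittleO_const_id_atTop C)
  refine IsBigO.trans_isLittleO (g := fun i => logb b (v i) + C) ?_ (ho.comp_tendsto hv)
  exact IsBigO.of_bound' (h.mono fun i hi => by simpa using hi.trans (le_abs_self _))

theorem Real.one_le_logb_two_natCast {n : ℕ} (hn : 2 ≤ n) : 1 ≤ logb 2 (n : ℝ) :=
  (le_logb_iff_rpow_le one_lt_two (by exact_mod_cast (by omega : 0 < n))).2
    (by rw [rpow_one]; exact_mod_cast hn)

namespace champ

/-- The number of digits of `1, …, a - 1` (the summand `k = 0` vanishes since `size 0 = 0`),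
so the digits of `a` occupy the positions `start a + 1, …, start (a + 1)` of `champ`. -/
def start (a : ℕ) : ℕ := ∑ k ∈ Finset.range a, k.size

theorem start_succ (a : ℕ) : start (a + 1) = start a + a.size :=
  Finset.sum_range_succ _ a

theorem start_eq_zero_of_le_one {a : ℕ} (ha : a ≤ 1) : start a = 0 := by
  interval_cases a <;> rfl

theorem le_start_succ (a : ℕ) : a ≤ start (a + 1) := by
  induction a with
  | zero => exact Nat.zero_le _
  | succ a ih =>
    have : 0 < (a + 1).size := Nat.size_pos.2 (Nat.succ_pos a)
    rw [start_succ]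
    omega

theorem start_two_pow_le (m : ℕ) : start (2 ^ m) ≤ m * 2 ^ m := by
  simpa [start, mul_comm] using Finset.sum_le_card_nsmul (Finset.range (2 ^ m)) Nat.size m
    fun k hk => Nat.size_le.2 (Finset.mem_range.1 hk)

theorem length_blockPrefix (M : ℕ) :
    (concatSeq.blockPrefix (fun n => (Nat.bits n).reverse) M).length = start (M + 1) := by
  induction M with
  | zero => rfl
  | succ M ih =>
    rw [concatSeq.blockPrefix_succ, List.length_append, ih, start_succ (M + 1),
      List.length_reverse, Nat.size_eq_bits_len]

theorem start_add {a j : ℕ} (hj : j < a.size) :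
    champ (start a + j + 1) = a.testBit (a.size - 1 - j) := by
  obtain ⟨M, rfl⟩ : ∃ M, a = M + 1 :=
    Nat.exists_eq_add_one.2 (Nat.size_pos.1 (by omega))
  have hb : ∀ k, (Nat.bits (k + 1)).reverse ≠ [] := fun k => by
    simp [← List.length_pos_iff, Nat.size_eq_bits_len, Nat.size_pos]
  rw [← length_blockPrefix, champ, concatSeq.length_blockPrefix_add hb
    (by simpa [Nat.size_eq_bits_len] using hj), List.getElem_reverse, Nat.testBit_eq_inth,
    List.getI_eq_getElem _ (by rw [Nat.size_eq_bits_len]; omega)]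
  simp [Nat.size_eq_bits_len]

theorem start_succ_sub {a d : ℕ} (hd : d < a.size) :
    champ (start (a + 1) - d) = a.testBit d := by
  have := start_add (a := a) (j := a.size - 1 - d) (by omega)
  rwa [show start a + (a.size - 1 - d) + 1 = start (a + 1) - d by rw [start_succ]; omega,
    show a.size - 1 - (a.size - 1 - d) = d by omega] at this

theorem exists_start_lt_le {p : ℕ} (hp : 0 < p) : ∃ a, start a < p ∧ p ≤ start (a + 1) := by
  classical
  have hex : ∃ a, p ≤ start (a + 1) := ⟨p, le_start_succ p⟩
  refine ⟨Nat.find hex, ?_, Nat.find_spec hex⟩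
  cases ha : Nat.find hex with
  | zero => simp [start_eq_zero_of_le_one, hp]
  | succ b => exact not_le.1 (Nat.find_min hex (by omega))

theorem add_le_size_of_ones {c t s : ℕ} (ht : t ≤ c.size) (hs : 0 < s)
    (hs' : s ≤ (c + 1).size)
    (hones : ∀ q, start (c + 1) - t < q → q ≤ start (c + 1) + s → champ q = true) :
    t + s ≤ (c + 1).size := by
  have hstart := start_succ c
  refine Nat.add_le_size_succ hs hs' (fun d hd => ?_) (fun d hd => ?_)
  · rw [← start_succ_sub (by omega)]
    exact hones _ (by omega) (by omega)
  · rw [← start_add (by omega)]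
    exact hones _ (by omega) (by omega)

theorem sub_le_size_of_ones {i p : ℕ} (hp : 0 < p)
    (hones : ∀ q, i < q → q ≤ p → champ q = true) : p - i ≤ p.size := by
  obtain ⟨a, hap, hpa⟩ := exists_start_lt_le hp
  have hstart := start_succ a
  have hap' : a ≤ p := by
    cases a with
    | zero => omega
    | succ a => have := le_start_succ a; omega
  refine le_trans ?_ (Nat.size_le_size hap')
  by_cases hia : start a ≤ i
  · omega
  obtain ⟨c, rfl⟩ : ∃ c, a = c + 1 :=
    Nat.exists_eq_add_one.2 (Nat.pos_of_ne_zero fun h => by simp [h, start] at hia)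
  have hc := start_succ c
  by_cases hic : start c ≤ i
  · have := add_le_size_of_ones (c := c) (t := start (c + 1) - i) (s := p - start (c + 1))
      (by omega) (by omega) (by omega) fun q hq hq' => hones q (by omega) (by omega)
    omega
  obtain ⟨b, rfl⟩ : ∃ b, c = b + 1 :=
    Nat.exists_eq_add_one.2 (Nat.pos_of_ne_zero fun h => by simp [h, start] at hic)
  have hb : 0 < b := Nat.pos_of_ne_zero fun h => hic (by simp [h, start_eq_zero_of_le_one])
  -- the run would cover the whole block of `b + 1` and the last digit of `b`
  have := add_le_size_of_ones (c := b) (t := 1) (s := (b + 1).size)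
    (Nat.size_pos.2 hb) (Nat.size_pos.2 (Nat.succ_pos b)) le_rfl
    fun q hq hq' => hones q (by omega) (by omega)
  omega

theorem runL_le_size (n : ℕ) : runL champ n ≤ n.size :=
  runL_le fun i j hij hones => by
    rcases Nat.eq_zero_or_pos j with rfl | hj
    · exact Nat.zero_le _
    have := sub_le_size_of_ones (i := i) (p := i + j) (by omega) fun q hq hq' => by
      simpa [Nat.add_sub_cancel' hq.le] using hones (q - i) (by omega) (by omega)
    exact le_trans (by omega) (this.trans (Nat.size_le_size hij))

theorem le_runL_of_mul_two_pow_le {m n : ℕ} (h : m * 2 ^ m ≤ n) : m ≤ runL champ n := by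
  have hpos := Nat.two_pow_pos m
  have hstart : start (2 ^ m - 1) + m = start (2 ^ m) := by
    simpa [Nat.sub_add_cancel hpos, Nat.size_two_pow_sub_one] using (start_succ (2 ^ m - 1)).symm
  refine le_runL (i := start (2 ^ m - 1))
    (by have := start_two_pow_le m; omega) fun k hk hkm => ?_
  have := start_add (a := 2 ^ m - 1) (j := k - 1) (by rw [Nat.size_two_pow_sub_one]; omega)
  rw [show start (2 ^ m - 1) + (k - 1) + 1 = start (2 ^ m - 1) + k by omega] at this
  rw [this, Nat.testBit_two_pow_sub_one, Nat.size_two_pow_sub_one, decide_eq_true_iff]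
  omega

theorem runL_le_logb_add_one {n : ℕ} (hn : n ≠ 0) : (runL champ n : ℝ) ≤ logb 2 n + 1 :=
  calc (runL champ n : ℝ) ≤ n.size := by exact_mod_cast runL_le_size n
    _ = Nat.log 2 n + 1 := by rw [Nat.size_eq_log_add_one hn]; push_cast; rfl
    _ ≤ logb 2 n + 1 := by gcongr; simpa using natLog_le_logb n 2

theorem logb_sub_logb_logb_sub_one_le_runL {n : ℕ} (hn : 2 ≤ n) :
    logb 2 n - logb 2 (logb 2 n) - 1 ≤ runL champ n := by
  set x := logb 2 (n : ℝ)
  have hn' : (2 : ℝ) ≤ n := by exact_mod_cast hn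
  have hx : 1 ≤ x := one_le_logb_two_natCast hn
  set m := ⌊x - logb 2 x⌋₊
  suffices (m : ℝ) ≤ runL champ n by linarith [Nat.lt_floor_add_one (x - logb 2 x)]
  rcases Nat.eq_zero_or_pos m with hm | hm
  · simp [hm]
  have hmx : (m : ℝ) ≤ x - logb 2 x := Nat.floor_le (by linarith [Nat.floor_pos.1 hm])
  have hlogx : 0 ≤ logb 2 x := logb_nonneg one_lt_two hx
  have hpow : (2 : ℝ) ^ m ≤ n / x :=
    calc (2 : ℝ) ^ m = 2 ^ (m : ℝ) := (rpow_natCast 2 m).symm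
      _ ≤ 2 ^ (x - logb 2 x) := rpow_le_rpow_of_exponent_le one_le_two hmx
      _ = n / x := by
        rw [rpow_sub two_pos, rpow_logb two_pos (by norm_num) (by linarith),
          rpow_logb two_pos (by norm_num) (by linarith)]
  have hmn : ((m * 2 ^ m : ℕ) : ℝ) ≤ n :=
    calc ((m * 2 ^ m : ℕ) : ℝ) = m * 2 ^ m := by push_cast; rfl
      _ ≤ x * (n / x) := by gcongr; linarith
      _ = n := by field_simp
  exact_mod_cast le_runL_of_mul_two_pow_le (by exact_mod_cast hmn)

theorem abs_runL_sub_logb_le {n : ℕ} (hn : 2 ≤ n) :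
    |runL champ n - logb 2 n| ≤ logb 2 (logb 2 n) + 1 := by
  have := logb_nonneg one_lt_two (one_le_logb_two_natCast hn)
  rw [abs_sub_le_iff]
  constructor
  · linarith [runL_le_logb_add_one (n := n) (by omega)]
  · linarith [logb_sub_logb_logb_sub_one_le_runL hn]

end champ

/-- The binary Champernowne sequence is typical: `L_n(c)/log₂ n → 1`. -/
theorem champ_typical : Typical champ := by
  have hlog : Tendsto (fun n : ℕ => logb 2 (n : ℝ)) atTop atTop :=
    (tendsto_logb_atTop one_lt_two).comp tendsto_natCast_atTop_atTop
  have hequiv : (fun n : ℕ => (runL champ n : ℝ)) ~[atTop] fun n => logb 2 (n : ℝ) :=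
    isEquivalent_of_abs_sub_le_logb hlog
      ((eventually_ge_atTop 2).mono fun n hn => champ.abs_runL_sub_logb_le hn)
  exact (isEquivalent_iff_tendsto_one (hlog.eventually_ne_atTop 0)).1 hequiv
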